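/- Let w̃ ∈ W̃, let θ ∈ [0,π], and let K ⊆ V^θ_{w̃} be a linear subspace with w̃(K) = K. Let A be a Weyl chamber such that A and w̃(A) lie in the same connected component of V − ∪_{H∈𝔥_K} H, and suppose the closure of A contains a nonzero vector v ∈ K such that for every H ∈ 𝔥, if v ∈ H and w̃(v) ∈ H then K ⊆ H. Then ℓ(w̃_A) = #𝔥(A, w̃(A)) = (θ/π)·#(𝔥 − 𝔥_K). -/

import Mathlib

open SemidirectProduct Set

section

variable {B W : Type*} [Group W]

/-- The extended group `W̃ = ⟨δ⟩ ⋉ W`. -/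
abbrev Wtilde (δ : MulAut W) := W ⋊[(Subgroup.zpowers δ).subtype] ↥(Subgroup.zpowers δ)

variable {M : CoxeterMatrix B} {δ : MulAut W} (cs : CoxeterSystem M W)

/-- The length function on `W̃`, extended from `W` by `ℓ(δ^i w) = ℓ(w)`. -/
noncomputable def tlen (x : Wtilde δ) : ℕ :=
  cs.length (((x.right : MulAut W))⁻¹ x.left)

/-- One step of conjugation by a simple reflection: `w̃ →_s w̃'`. -/
def cstep (x y : Wtilde δ) : Prop :=
  ∃ i : B, y = inl (cs.simple i) * x * inl (cs.simple i) ∧ tlen cs y ≤ tlen cs x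

variable {V : Type*} [NormedAddCommGroup V] [InnerProductSpace ℝ V] [FiniteDimensional ℝ V]
variable (ρ : Wtilde δ →* (V ≃ₗᵢ[ℝ] V))

/-- The set `𝔥` of hyperplanes of `V` whose orthogonal reflection is realized by an
element of `W`. -/
noncomputable def mirrors : Set (Submodule ℝ V) :=
  {H | Module.finrank ℝ H + 1 = Module.finrank ℝ V ∧
    ∃ w : W, ρ (inl w) = H.reflection}

/-- The complement of the union of all the reflecting hyperplanes. -/
def chamberDom : Set V := {v | ∀ H ∈ mirrors ρ, v ∉ H}

/-- A Weyl chamber: a connected component of the complement of the mirrors. -/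
def IsChamber (A : Set V) : Prop :=
  ∃ v ∈ chamberDom ρ, A = connectedComponentIn (chamberDom ρ) v

/-- The hyperplane `H` separates `a` and `b`: the segment from `a` to `b` meets `H`. -/
def SepPts (H : Submodule ℝ V) (a b : V) : Prop := ∃ x ∈ segment ℝ a b, x ∈ H

/-- The set `𝔥(A, A')` of reflecting hyperplanes separating `A` and `A'`. -/
noncomputable def sepSet (A A' : Set V) : Set (Submodule ℝ V) :=
  {H | H ∈ mirrors ρ ∧ ∀ a ∈ A, ∀ b ∈ A', SepPts H a b}

/-- `v` is a regular point of the convex set `K`: every reflecting hyperplane through `v`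
contains `K`. -/
def IsRegPt (K : Set V) (v : V) : Prop :=
  v ∈ K ∧ ∀ H ∈ mirrors ρ, v ∈ H → K ⊆ (H : Set V)

/-- The submodule `V^W` of `W`-fixed points. -/
def fixedW : Submodule ℝ V where
  carrier := {v | ∀ w : W, ρ (inl w) v = v}
  add_mem' := by
    intro a b ha hb w
    simp only [map_add, ha w, hb w]
  zero_mem' := by
    intro w
    simp
  smul_mem' := by
    intro c a ha w
    simp only [map_smul, ha w]

/-- The "eigenspace" `V^θ_{w̃} = {v | w̃ v + w̃⁻¹ v = 2 cos θ · v}`. -/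
def eigSp (x : Wtilde δ) (θ : ℝ) : Submodule ℝ V where
  carrier := {v | ρ x v + ρ x⁻¹ v = (2 * Real.cos θ) • v}
  add_mem' := by
    intro a b ha hb
    simp only [Set.mem_setOf_eq, map_add] at *
    rw [smul_add, ← ha, ← hb]
    abel
  zero_mem' := by simp
  smul_mem' := by
    intro c a ha
    simp only [Set.mem_setOf_eq, map_smul] at *
    rw [← smul_add, ha, smul_comm]

/-- `V_{w̃} = V^{θ₀}_{w̃} ∩ (V^W)^⊥`. -/
noncomputable def Vmin (x : Wtilde δ) (θ₀ : ℝ) : Submodule ℝ V :=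
  eigSp ρ x θ₀ ⊓ (fixedW ρ)ᗮ

/-- The complement of the union of the mirrors containing `K`
(whose connected components house the chambers adapted to `K`). -/
def chamberDomK (K : Set V) : Set V :=
  {v | ∀ H ∈ mirrors ρ, K ⊆ (H : Set V) → v ∉ H}

/-- The face of (the chamber) `A` in the hyperplane `H`: the interior, in `H`, of `H ∩ Ā`. -/
def faceIn (H : Submodule ℝ V) (A : Set V) : Set V :=
  Subtype.val '' (interior {h : H | (h : V) ∈ closure A})

/-- The subgroup `W_K` of `W` generated by the reflections in the mirrors containing `K`. -/
noncomputable def WKsub (K : Set V) : Subgroup W :=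
  Subgroup.closure {w : W | ∃ H ∈ mirrors ρ, K ⊆ (H : Set V) ∧ ρ (inl w) = H.reflection}

end

/-!
Since `A` and `w̃A` lie in one component of `V − ⋃ 𝔥_K`, no mirror containing `K` separates
them. A mirror `H ∈ 𝔥 − 𝔥_K` does not contain both `v` and `w̃v`; as `v ∈ Ā` and
`w̃v ∈ closure (w̃A)`, whenever neither lies on `H`, the mirror `H` separates `A` from `w̃A` iff
`v` and `w̃v` lie on opposite sides of it.

For `θ ∈ {0, π}` we have `w̃v = ±v`, so all of `𝔥 − 𝔥_K` separates `A` from `w̃A` when `θ = π`,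
and none of it when `θ = 0`.

For `0 < θ < π`, `w̃` rotates the plane spanned by `v` and `w̃v` by `θ`, so for a mirror `H`
with normal `n` the numbers `⟪n, w̃ᵏv⟫` have the signs of `R sin (kθ + ψ)` with `R > 0`. Let `d`
be the order of `w̃`; then `dθ = 2πq`, and along the closed gallery `A, w̃A, …, w̃ᵈA = A` the
mirror `H` is crossed once each time `kθ + ψ` passes a multiple of `π`, that is `2q` times. Since
`w̃` permutes the mirrors, every step crosses `#𝔥(A, w̃A)` of them; double counting gives
`d · #𝔥(A, w̃A) = 2q · #(𝔥 − 𝔥_K)`.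
-/

open Real Finset Function

lemma sin_pos_iff_odd {u : ℝ} {c : ℤ} (h₁ : (c - 1) * π < u) (h₂ : u < c * π) :
    0 < sin u ↔ Odd c := by
  have hneg : sin (u - c * π) < 0 :=
    sin_neg_of_neg_of_neg_pi_lt (by linarith) (by linarith)
  have hsin : sin u = (-1) ^ c * sin (u - c * π) := by
    rw [← sin_add_int_mul_pi, sub_add_cancel]
  rcases Int.even_or_odd c with hc | hc
  · rw [hsin, hc.neg_one_zpow, one_mul]
    exact iff_of_false hneg.not_gt (Int.not_odd_iff_even.mpr hc)
  · rw [hsin, hc.neg_one_zpow]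
    exact iff_of_true (by linarith) hc

lemma exists_mul_pi_le_odd_iff {u : ℝ} {P : Prop} (hP : sin u ≠ 0 → (P ↔ 0 < sin u)) :
    ∃ c : ℤ, (c - 1) * π ≤ u ∧ u ≤ c * π ∧ (P ↔ Odd c) := by
  by_cases hu : sin u = 0
  · obtain ⟨m, rfl⟩ := sin_eq_zero_iff.mp hu
    by_cases hm : P ↔ Odd m
    · exact ⟨m, by nlinarith [pi_pos], le_rfl, hm⟩
    · refine ⟨m + 1, by push_cast; linarith, by push_cast; nlinarith [pi_pos], ?_⟩
      rw [odd_add_one, ← Int.not_odd_iff_even]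
      tauto
  · set c := ⌈u / π⌉
    have h₁ : u ≤ c * π := (div_le_iff₀ pi_pos).mp (Int.le_ceil _)
    have h₂ : (c - 1) * π < u :=
      (lt_div_iff₀ pi_pos).mp (by linarith [Int.ceil_lt_add_one (u / π)])
    have h₃ : u ≠ c * π := fun h => hu (h ▸ sin_int_mul_pi c)
    exact ⟨c, h₂.le, h₁, (hP hu).trans (sin_pos_iff_odd h₂ (lt_of_le_of_ne h₁ h₃))⟩

lemma eq_or_eq_add_one_of_mul_pi_le {u θ : ℝ} {a b : ℤ} (hθ : 0 < θ) (hθπ : θ < π)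
    (ha₁ : (a - 1) * π ≤ u) (ha₂ : u ≤ a * π) (hb₁ : (b - 1) * π ≤ u + θ) (hb₂ : u + θ ≤ b * π) :
    b = a ∨ b = a + 1 := by
  have h₁ : (b : ℝ) - 1 < a + 1 := lt_of_mul_lt_mul_right (by linarith) pi_pos.le
  have h₂ : (a : ℝ) - 1 < b := lt_of_mul_lt_mul_right (by linarith) pi_pos.le
  have h₁' : b - 1 < a + 1 := by exact_mod_cast h₁
  have h₂' : a - 1 < b := by exact_mod_cast h₂
  omega

lemma eq_of_mul_pi_le_of_odd_iff {u : ℝ} {a b : ℤ}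
    (ha₁ : (a - 1) * π ≤ u) (ha₂ : u ≤ a * π) (hb₁ : (b - 1) * π ≤ u) (hb₂ : u ≤ b * π)
    (hab : Odd a ↔ Odd b) : a = b := by
  have h₁ : (b : ℝ) - 1 ≤ a := le_of_mul_le_mul_right (by linarith) pi_pos
  have h₂ : (a : ℝ) - 1 ≤ b := le_of_mul_le_mul_right (by linarith) pi_pos
  have h₁' : b - 1 ≤ a := by exact_mod_cast h₁
  have h₂' : a - 1 ≤ b := by exact_mod_cast h₂
  rcases (show a = b + 1 ∨ b = a ∨ b = a + 1 by omega) with rfl | rfl | rfl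
  · rw [odd_add_one, ← Int.not_odd_iff_even] at hab; tauto
  · rfl
  · rw [odd_add_one, ← Int.not_odd_iff_even] at hab; tauto

lemma mul_neg_iff_not_pos_iff {a b : ℝ} (ha : a ≠ 0) (hb : b ≠ 0) :
    a * b < 0 ↔ ¬(0 < a ↔ 0 < b) := by
  rw [mul_neg_iff]
  rcases ha.lt_or_gt with ha | ha <;> rcases hb.lt_or_gt with hb | hb <;>
    simp [ha, hb, ha.not_gt, hb.not_gt]

theorem card_filter_mul_neg_eq {θ ψ : ℝ} (hθ : 0 < θ) (hθπ : θ < π) {d q : ℕ}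
    (hdq : d * θ = 2 * π * q) {s : ℕ → ℝ} (hs0 : ∀ k, s k ≠ 0) (hsd : s d = s 0)
    (hs : ∀ k : ℕ, sin (k * θ + ψ) ≠ 0 → 0 < s k * sin (k * θ + ψ)) :
    #{k ∈ range d | s k * s (k + 1) < 0} = 2 * q := by
  -- `c k` locates `k θ + ψ` between consecutive multiples of `π` and its parity records the
  -- sign of `s k`; it goes up by `1` exactly at the sign changes of `s`.
  choose c hc₁ hc₂ hcs using fun k : ℕ =>
    exists_mul_pi_le_odd_iff (u := k * θ + ψ) (P := 0 < s k) fun h =>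
      pos_iff_pos_of_mul_pos (hs k h)
  have hstep (k : ℕ) : c (k + 1) = c k ∨ c (k + 1) = c k + 1 := by
    have h₁ := hc₁ (k + 1)
    have h₂ := hc₂ (k + 1)
    push_cast at h₁ h₂
    exact eq_or_eq_add_one_of_mul_pi_le hθ hθπ (hc₁ k) (hc₂ k) (by linarith) (by linarith)
  have hterm (k : ℕ) : (if s k * s (k + 1) < 0 then 1 else 0 : ℤ) = c (k + 1) - c k := by
    rw [if_congr ((mul_neg_iff_not_pos_iff (hs0 k) (hs0 (k + 1))).trans (by rw [hcs, hcs]))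
      rfl rfl]
    rcases hstep k with h | h <;> rw [h]
    · simp
    · simp [odd_add_one, ← Int.not_odd_iff_even]
  have hperiod : c d = c 0 + 2 * q := by
    have h₁ := hc₁ 0
    have h₂ := hc₂ 0
    simp only [CharP.cast_eq_zero, zero_mul, zero_add] at h₁ h₂
    refine eq_of_mul_pi_le_of_odd_iff (hc₁ d) (hc₂ d) (by push_cast; linarith)
      (by push_cast; linarith) ?_
    rw [← hcs, hsd, hcs, Int.odd_add]
    simp
  zify
  calc ((#{k ∈ range d | s k * s (k + 1) < 0} : ℕ) : ℤ)
      = ∑ k ∈ range d, (c (k + 1) - c k) := by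
        rw [card_filter]
        push_cast
        exact sum_congr rfl fun k _ => hterm k
    _ = 2 * q := by
        rw [sum_range_sub, hperiod]
        ring

lemma exists_pos_mul_sin_add_eq {a b : ℝ} (h : a ≠ 0 ∨ b ≠ 0) :
    ∃ R > 0, ∃ ψ, ∀ t, a * cos t + b * sin t = R * sin (t + ψ) := by
  set z : ℂ := ⟨b, a⟩
  have hz : z ≠ 0 := fun hz => by
    rcases h with h | h
    · exact h (congrArg Complex.im hz)
    · exact h (congrArg Complex.re hz)
  refine ⟨‖z‖, norm_pos_iff.mpr hz, z.arg, fun t => ?_⟩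
  have hcos : ‖z‖ * cos z.arg = b := Complex.norm_mul_cos_arg z
  have hsin : ‖z‖ * sin z.arg = a := Complex.norm_mul_sin_arg z
  rw [sin_add, ← hcos, ← hsin]
  ring

lemma sin_smul_eq_of_recurrence {E : Type*} [AddCommGroup E] [Module ℝ E] {θ : ℝ} {u : ℕ → E}
    (hu : ∀ k, u (k + 2) = (2 * cos θ) • u (k + 1) - u k) (k : ℕ) :
    sin θ • u k = sin ((1 - k) * θ) • u 0 + sin (k * θ) • u 1 := by
  induction k using Nat.twoStepInduction with
  | zero => simp
  | one => simp
  | more k ih₀ ih₁ =>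
    rw [hu, smul_sub, smul_comm, ih₀, ih₁]
    have h₁ : sin ((1 - (k + 2 : ℕ)) * θ) = 2 * cos θ * sin ((1 - (k + 1 : ℕ)) * θ)
        - sin ((1 - k) * θ) := by
      push_cast
      rw [show (1 - (k + 2 : ℝ)) * θ = (1 - (k + 1)) * θ - θ by ring,
        show (1 - k : ℝ) * θ = (1 - (k + 1)) * θ + θ by ring, sin_sub, sin_add]
      ring
    have h₂ : sin ((k + 2 : ℕ) * θ) = 2 * cos θ * sin ((k + 1 : ℕ) * θ) - sin (k * θ) := by
      push_cast
      rw [show (k + 2 : ℝ) * θ = (k + 1) * θ + θ by ring,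
        show (k : ℝ) * θ = (k + 1) * θ - θ by ring, sin_sub, sin_add]
      ring
    rw [h₁, h₂]
    module

lemma exists_pos_mul_sin_add_of_recurrence {θ : ℝ} (hθ : 0 < sin θ) {g : ℕ → ℝ}
    (hg : ∀ k, g (k + 2) = 2 * cos θ * g (k + 1) - g k) (h01 : g 0 ≠ 0 ∨ g 1 ≠ 0) :
    ∃ R > 0, ∃ ψ, ∀ k : ℕ, g k = R * sin (k * θ + ψ) := by
  have hab : sin θ * g 0 ≠ 0 ∨ g 1 - cos θ * g 0 ≠ 0 := by
    by_contra! h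
    rcases h01 with h01 | h01
    · exact h01 ((mul_eq_zero.mp h.1).resolve_left hθ.ne')
    · exact h01 (by rcases mul_eq_zero.mp h.1 with h' | h' <;> simp_all)
  obtain ⟨R, hR, ψ, hψ⟩ := exists_pos_mul_sin_add_eq hab
  refine ⟨R / sin θ, div_pos hR hθ, ψ, fun k => ?_⟩
  have hk := sin_smul_eq_of_recurrence (u := g) (fun k => by simpa using hg k) k
  simp only [smul_eq_mul] at hk
  rw [div_mul_eq_mul_div, ← hψ, eq_div_iff hθ.ne', mul_comm, hk, sub_mul, one_mul, sin_sub]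
  ring

lemma cos_mul_eq_one_of_periodic {E : Type*} [AddCommGroup E] [Module ℝ E] {θ : ℝ} {u : ℕ → E}
    (hu : ∀ k, u (k + 2) = (2 * cos θ) • u (k + 1) - u k)
    (hind : LinearIndependent ℝ ![u 0, u 1]) (hθ : sin θ ≠ 0) {d : ℕ} (hd : u d = u 0) :
    cos (d * θ) = 1 := by
  have h := sin_smul_eq_of_recurrence hu d
  rw [hd] at h
  obtain ⟨h₀, h₁⟩ := LinearIndependent.pair_iff.mp hind (sin ((1 - d) * θ) - sin θ) (sin (d * θ))
    (by rw [sub_smul, h]; abel)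
  rw [sub_mul, one_mul, sin_sub, h₁] at h₀
  have : sin θ * (cos (d * θ) - 1) = 0 := by linarith
  linarith [(mul_eq_zero.mp this).resolve_left hθ]

lemma zero_mem_uIcc_iff {a b : ℝ} : (0 : ℝ) ∈ uIcc a b ↔ a * b ≤ 0 := by
  rw [Set.mem_uIcc, mul_nonpos_iff]
  tauto

lemma mul_neg_iff_of_mul_pos {a a' b b' : ℝ} (ha : 0 < a * a') (hb : 0 < b * b') :
    a * b < 0 ↔ a' * b' < 0 :=
  neg_iff_neg_of_mul_pos (by nlinarith [mul_pos ha hb])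

section Sign

variable {X : Type*} [TopologicalSpace X] {S : Set X} {f : X → ℝ}

lemma IsPreconnected.mul_pos_of_ne_zero (hS : IsPreconnected S) (hf : ContinuousOn f S)
    (h0 : ∀ w ∈ S, f w ≠ 0) {a b : X} (ha : a ∈ S) (hb : b ∈ S) : 0 < f a * f b := by
  by_contra! h
  obtain ⟨c, hc, hc0⟩ := (hS.image f hf).ordConnected.uIcc_subset (mem_image_of_mem f ha)
    (mem_image_of_mem f hb) (zero_mem_uIcc_iff.mpr h)
  exact h0 c hc hc0

lemma IsPreconnected.mul_pos_of_mem_closure (hS : IsPreconnected S) (hf : Continuous f)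
    (h0 : ∀ w ∈ S, f w ≠ 0) {a p : X} (ha : a ∈ S) (hp : p ∈ closure S) (hp0 : f p ≠ 0) :
    0 < f a * f p := by
  have : 0 ≤ f a * f p :=
    closure_minimal (fun b hb => (hS.mul_pos_of_ne_zero hf.continuousOn h0 ha hb).le)
      (isClosed_le continuous_const (continuous_const.mul hf)) hp
  exact this.lt_of_ne (mul_ne_zero (h0 a ha) hp0).symm

end Sign

section Hyperplane

variable {V : Type*} [NormedAddCommGroup V] [InnerProductSpace ℝ V]

lemma sepPts_ker_iff (f : Module.Dual ℝ V) (a b : V) :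
    SepPts (LinearMap.ker f) a b ↔ f a * f b ≤ 0 := by
  have h := image_segment ℝ f.toAffineMap a b
  simp only [LinearMap.coe_toAffineMap] at h
  rw [← zero_mem_uIcc_iff, ← segment_eq_uIcc, ← h]
  simp [SepPts]

lemma SepPts.map {H : Submodule ℝ V} {a b : V} (h : SepPts H a b) (f : V →ₗ[ℝ] V) :
    SepPts (H.map f) (f a) (f b) := by
  obtain ⟨p, hp, hpH⟩ := h
  have h := image_segment ℝ f.toAffineMap a b
  simp only [LinearMap.coe_toAffineMap] at h
  exact ⟨f p, h ▸ mem_image_of_mem f hp, Submodule.mem_map_of_mem hpH⟩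

lemma subset_of_subset_map {f : V →ₗ[ℝ] V} (hf : Injective f) {K : Set V} (hK : MapsTo f K K)
    {H : Submodule ℝ V} (h : K ⊆ H.map f) : K ⊆ H := fun k hk => by
  obtain ⟨k', hk', hkk'⟩ := h (hK hk)
  exact hf hkk' ▸ hk'

lemma exists_ker_eq_of_finrank_add_one [FiniteDimensional ℝ V] {H : Submodule ℝ V}
    (hH : Module.finrank ℝ H + 1 = Module.finrank ℝ V) :
    ∃ f : Module.Dual ℝ V, LinearMap.ker f = H := by
  have h1 : Module.finrank ℝ Hᗮ = 1 := by
    have := H.finrank_add_finrank_orthogonal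
    omega
  obtain ⟨n, -, hn⟩ := finrank_eq_one_iff'.mp h1
  refine ⟨innerₗ V n, ?_⟩
  ext w
  conv_rhs => rw [← H.orthogonal_orthogonal]
  rw [LinearMap.mem_ker, innerₗ_apply_apply, Submodule.mem_orthogonal]
  constructor
  · intro hw m hm
    obtain ⟨c, hc⟩ := hn ⟨m, hm⟩
    have hm' : m = c • (n : V) := congrArg Subtype.val hc.symm
    rw [hm', inner_smul_left, hw, mul_zero]
  · exact fun hw => hw n n.2

end Hyperplane

namespace SemidirectProduct

variable {N G : Type*} [Group N] [Group G] {φ : G →* MulAut N}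

instance [Finite N] [Finite G] : Finite (N ⋊[φ] G) :=
  Finite.of_equiv _ equivProd.symm

lemma conj_inl_mem_range (y : N ⋊[φ] G) (n : N) :
    y * inl n * y⁻¹ ∈ (inl : N →* N ⋊[φ] G).range := by
  rw [range_inl_eq_ker_rightHom] at *
  exact (MonoidHom.normal_ker _).conj_mem _ (by simp) y

end SemidirectProduct

section Chambers

variable {W : Type*} [Group W] {δ : MulAut W}
variable {V : Type*} [NormedAddCommGroup V] [InnerProductSpace ℝ V] [FiniteDimensional ℝ V]
variable {ρ : Wtilde δ →* (V ≃ₗᵢ[ℝ] V)}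

lemma exists_ker_eq_of_mem_mirrors {H : Submodule ℝ V} (hH : H ∈ mirrors ρ) :
    ∃ f : Module.Dual ℝ V, LinearMap.ker f = H :=
  exists_ker_eq_of_finrank_add_one hH.1

lemma map_mem_mirrors {H : Submodule ℝ V} (hH : H ∈ mirrors ρ) (y : Wtilde δ) :
    H.map (ρ y).toLinearEquiv.toLinearMap ∈ mirrors ρ := by
  obtain ⟨hdim, w, hw⟩ := hH
  obtain ⟨w', hw'⟩ := conj_inl_mem_range y w
  refine ⟨(LinearEquiv.finrank_map_eq (ρ y).toLinearEquiv H).symm ▸ hdim, w', ?_⟩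
  rw [hw', map_mul, map_mul, hw, Submodule.reflection_map, map_inv]
  rfl

lemma apply_mem_chamberDom {a : V} (ha : a ∈ chamberDom ρ) (y : Wtilde δ) :
    ρ y a ∈ chamberDom ρ := by
  intro H hH hya
  exact ha _ (map_mem_mirrors hH y⁻¹) ⟨ρ y a, hya, by simp⟩

lemma image_chamberDom (y : Wtilde δ) : ρ y '' chamberDom ρ = chamberDom ρ :=
  (Set.image_subset_iff.mpr fun _ ha => apply_mem_chamberDom ha y).antisymm
    fun a ha => ⟨ρ y⁻¹ a, apply_mem_chamberDom ha y⁻¹, by simp⟩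

namespace IsChamber

variable {A : Set V}

lemma nonempty (hA : IsChamber ρ A) : A.Nonempty := by
  obtain ⟨v, hv, rfl⟩ := hA
  exact ⟨v, mem_connectedComponentIn hv⟩

lemma isPreconnected (hA : IsChamber ρ A) : IsPreconnected A := by
  obtain ⟨v, -, rfl⟩ := hA
  exact isPreconnected_connectedComponentIn

lemma subset_chamberDom (hA : IsChamber ρ A) : A ⊆ chamberDom ρ := by
  obtain ⟨v, -, rfl⟩ := hA
  exact connectedComponentIn_subset _ _

lemma image (hA : IsChamber ρ A) (y : Wtilde δ) : IsChamber ρ (ρ y '' A) := by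
  obtain ⟨v, hv, rfl⟩ := hA
  refine ⟨ρ y v, apply_mem_chamberDom hv y, ?_⟩
  have := (ρ y).toHomeomorph.image_connectedComponentIn hv
  rwa [LinearIsometryEquiv.coe_toHomeomorph, image_chamberDom] at this

lemma apply_ne_zero (hA : IsChamber ρ A) {f : Module.Dual ℝ V}
    (hf : LinearMap.ker f ∈ mirrors ρ) {a : V} (ha : a ∈ A) : f a ≠ 0 :=
  hA.subset_chamberDom ha _ hf

lemma mul_pos_of_mem_closure (hA : IsChamber ρ A) {f : Module.Dual ℝ V}
    (hf : LinearMap.ker f ∈ mirrors ρ) {a p : V} (ha : a ∈ A) (hp : p ∈ closure A)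
    (hp0 : f p ≠ 0) : 0 < f a * f p :=
  hA.isPreconnected.mul_pos_of_mem_closure (LinearMap.continuous_of_finiteDimensional f)
    (fun _ hw => hA.apply_ne_zero hf hw) ha hp hp0

end IsChamber

lemma mem_sepSet_iff {A₁ A₂ : Set V} (hA₁ : IsChamber ρ A₁) (hA₂ : IsChamber ρ A₂)
    {f : Module.Dual ℝ V} (hf : LinearMap.ker f ∈ mirrors ρ) {p₁ p₂ : V}
    (hp₁ : p₁ ∈ closure A₁) (hp₂ : p₂ ∈ closure A₂) (hp₁0 : f p₁ ≠ 0) (hp₂0 : f p₂ ≠ 0) :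
    LinearMap.ker f ∈ sepSet ρ A₁ A₂ ↔ f p₁ * f p₂ < 0 := by
  have key : ∀ a ∈ A₁, ∀ b ∈ A₂, f a * f b < 0 ↔ f p₁ * f p₂ < 0 := fun a ha b hb =>
    mul_neg_iff_of_mul_pos (hA₁.mul_pos_of_mem_closure hf ha hp₁ hp₁0)
      (hA₂.mul_pos_of_mem_closure hf hb hp₂ hp₂0)
  obtain ⟨a, ha⟩ := hA₁.nonempty
  obtain ⟨b, hb⟩ := hA₂.nonempty
  refine ⟨fun h => (key a ha b hb).mp ?_, fun h =>
    ⟨hf, fun a ha b hb => (sepPts_ker_iff f a b).mpr ((key a ha b hb).mpr h).le⟩⟩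
  exact ((sepPts_ker_iff f a b).mp (h.2 a ha b hb)).lt_of_ne
    (mul_ne_zero (hA₁.apply_ne_zero hf ha) (hA₂.apply_ne_zero hf hb))

lemma not_subset_of_mem_sepSet {K : Set V} {A₁ A₂ : Set V} (hA₁ : A₁ ⊆ chamberDom ρ)
    (hcomp : ∃ a ∈ A₁, ∃ b ∈ A₂, b ∈ connectedComponentIn (chamberDomK ρ K) a)
    {H : Submodule ℝ V} (hH : H ∈ sepSet ρ A₁ A₂) : ¬ K ⊆ H := by
  intro hKH
  obtain ⟨a, ha, b, hb, hab⟩ := hcomp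
  obtain ⟨f, rfl⟩ := exists_ker_eq_of_mem_mirrors hH.1
  have ha' : a ∈ chamberDomK ρ K := fun H hH _ => hA₁ ha H hH
  have hpos := isPreconnected_connectedComponentIn.mul_pos_of_ne_zero
    (LinearMap.continuous_of_finiteDimensional f).continuousOn
    (fun w hw => (connectedComponentIn_subset _ a hw : w ∈ chamberDomK ρ K) _ hH.1 hKH)
    (mem_connectedComponentIn ha') hab
  exact hpos.not_ge ((sepPts_ker_iff f a b).mp (hH.2 a ha b hb))

lemma sepSet_image (y : Wtilde δ) (A A' : Set V) :
    sepSet ρ (ρ y '' A) (ρ y '' A') =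
      (fun H => H.map (ρ y).toLinearEquiv.toLinearMap) '' sepSet ρ A A' := by
  have hsub : ∀ (y : Wtilde δ) (A A' : Set V),
      (fun H => H.map (ρ y).toLinearEquiv.toLinearMap) '' sepSet ρ A A' ⊆
        sepSet ρ (ρ y '' A) (ρ y '' A') := by
    rintro y A A' _ ⟨H, ⟨hH, hsep⟩, rfl⟩
    refine ⟨map_mem_mirrors hH y, ?_⟩
    rintro _ ⟨a, ha, rfl⟩ _ ⟨b, hb, rfl⟩
    exact (hsep a ha b hb).map _
  refine (subset_antisymm ?_ (hsub y A A'))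
  intro H hH
  refine ⟨H.map (ρ y⁻¹).toLinearEquiv.toLinearMap, ?_, ?_⟩
  · simpa [image_image] using hsub y⁻¹ _ _ ⟨H, hH, rfl⟩
  · ext
    simp [LinearIsometryEquiv.inv_def]

lemma mirrors_finite [Finite W] : (mirrors ρ).Finite := by
  refine Set.Finite.of_finite_image (f := fun H : Submodule ℝ V => H.reflection) ?_ ?_
  · exact (Set.finite_range fun w : W => ρ (inl w)).subset
      (Set.image_subset_iff.mpr fun H hH => hH.2.imp fun _ => id)
  · intro H₁ _ H₂ _ (h : H₁.reflection = H₂.reflection)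
    ext v
    rw [← Submodule.reflection_eq_self_iff, ← Submodule.reflection_eq_self_iff v, h]

end Chambers

section Eigen

variable {W : Type*} [Group W] {δ : MulAut W}
variable {V : Type*} [NormedAddCommGroup V] [InnerProductSpace ℝ V]
variable {ρ : Wtilde δ →* (V ≃ₗᵢ[ℝ] V)} {x : Wtilde δ} {θ : ℝ} {v : V}

lemma inner_apply_self_of_mem_eigSp (hv : v ∈ eigSp ρ x θ) :
    inner ℝ (ρ x v) v = cos θ * ‖v‖ ^ 2 := by
  have hsym : inner ℝ (ρ x⁻¹ v) v = inner ℝ (ρ x v) v := by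
    rw [real_inner_comm, ← (ρ x).inner_map_map]
    simp
  have h := congrArg (inner ℝ · v) (show ρ x v + ρ x⁻¹ v = (2 * cos θ) • v from hv)
  simp only [inner_add_left, real_inner_smul_left, real_inner_self_eq_norm_sq, hsym] at h
  linarith

lemma norm_apply_sub_cos_smul_sq (hv : v ∈ eigSp ρ x θ) :
    ‖ρ x v - cos θ • v‖ ^ 2 = sin θ ^ 2 * ‖v‖ ^ 2 := by
  rw [norm_sub_sq_real, (ρ x).norm_map, real_inner_smul_right, inner_apply_self_of_mem_eigSp hv,
    norm_smul, Real.norm_eq_abs, mul_pow, sq_abs, sin_sq]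
  ring

lemma apply_eq_cos_smul_of_sin_eq_zero (hv : v ∈ eigSp ρ x θ) (hθ : sin θ = 0) :
    ρ x v = cos θ • v := by
  have h := norm_apply_sub_cos_smul_sq hv
  rw [hθ] at h
  simpa [sub_eq_zero] using h

lemma linearIndependent_of_mem_eigSp (hv : v ∈ eigSp ρ x θ) (hv0 : v ≠ 0) (hθ : sin θ ≠ 0) :
    LinearIndependent ℝ ![v, ρ x v] := by
  rw [LinearIndependent.pair_iff]
  intro s t hst
  have hN : 0 < ‖v‖ ^ 2 := by positivity
  have hc := inner_apply_self_of_mem_eigSp hv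
  have h₁ := congrArg (inner ℝ · v) hst
  have h₂ := congrArg (inner ℝ · (ρ x v)) hst
  simp only [inner_add_left, real_inner_smul_left, real_inner_self_eq_norm_sq, inner_zero_left,
    (ρ x).norm_map, hc] at h₁ h₂
  rw [real_inner_comm, hc] at h₂
  have e₁ : s + t * cos θ = 0 := by nlinarith
  have e₂ : s * cos θ + t = 0 := by nlinarith
  have ht : t * sin θ ^ 2 = 0 := by rw [sin_sq]; linear_combination e₂ - cos θ * e₁
  have ht' : t = 0 := by simpa [hθ] using ht
  exact ⟨by simpa [ht'] using e₁, ht'⟩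

lemma mapsTo_pow {K : Set V} (hK : MapsTo (ρ x) K K) (k : ℕ) : MapsTo (ρ (x ^ k)) K K := by
  induction k with
  | zero => simpa using mapsTo_id K
  | succ k ih =>
    rw [pow_succ, map_mul, LinearIsometryEquiv.coe_mul]
    exact ih.comp hK

lemma pow_add_two_apply {K : Submodule ℝ V} (hK : K ≤ eigSp ρ x θ)
    (hKx : MapsTo (ρ x) K K) (hv : v ∈ K) (k : ℕ) :
    ρ (x ^ (k + 2)) v = (2 * cos θ) • ρ (x ^ (k + 1)) v - ρ (x ^ k) v := by
  have h : ρ x (ρ (x ^ (k + 1)) v) + ρ x⁻¹ (ρ (x ^ (k + 1)) v) =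
      (2 * cos θ) • ρ (x ^ (k + 1)) v :=
    hK (mapsTo_pow hKx (k + 1) hv)
  rw [← h, pow_succ' x (k + 1), pow_succ' x k]
  simp

lemma exists_pow_eq_one_mul_eq [Finite W] {K : Submodule ℝ V} (hθ0 : 0 < θ) (hθπ : θ < π)
    (hK : K ≤ eigSp ρ x θ) (hKx : MapsTo (ρ x) K K) (hvK : v ∈ K) (hv0 : v ≠ 0) :
    ∃ d q : ℕ, 0 < d ∧ x ^ d = 1 ∧ d * θ = 2 * π * q := by
  have hsin : sin θ ≠ 0 := (sin_pos_of_pos_of_lt_pi hθ0 hθπ).ne'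
  have hcos : cos (orderOf x * θ) = 1 :=
    cos_mul_eq_one_of_periodic (u := fun k => ρ (x ^ k) v) (pow_add_two_apply hK hKx hvK)
      (by simpa using linearIndependent_of_mem_eigSp (hK hvK) hv0 hsin) hsin
      (by simp [pow_orderOf_eq_one])
  obtain ⟨n, hn⟩ := (cos_eq_one_iff _).mp hcos
  have hn0 : 0 ≤ n := by
    have : (0 : ℝ) < n * (2 * π) := hn ▸ mul_pos (by exact_mod_cast orderOf_pos x) hθ0
    exact_mod_cast (pos_of_mul_pos_left this (by positivity)).le
  lift n to ℕ using hn0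
  exact ⟨orderOf x, n, orderOf_pos x, pow_orderOf_eq_one x, by rw [← hn]; push_cast; ring⟩

end Eigen

section Counting

variable {W : Type*} [Group W] {δ : MulAut W}
variable {V : Type*} [NormedAddCommGroup V] [InnerProductSpace ℝ V] [FiniteDimensional ℝ V]
variable {ρ : Wtilde δ →* (V ≃ₗᵢ[ℝ] V)} {x : Wtilde δ} {θ : ℝ} {K : Submodule ℝ V} {A : Set V}
  {v : V}

open Classical in
lemma card_filter_mem_sepSet_pow {d q : ℕ} (hθ0 : 0 < θ) (hθπ : θ < π)
    (hdq : d * θ = 2 * π * q) (hxd : x ^ d = 1) (hK : K ≤ eigSp ρ x θ)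
    (hKx : MapsTo (ρ x) K K) (hA : IsChamber ρ A) (hvK : v ∈ K) (hvA : v ∈ closure A)
    {f : Module.Dual ℝ V} (hf : LinearMap.ker f ∈ mirrors ρ) (hfv : f v ≠ 0 ∨ f (ρ x v) ≠ 0) :
    #{k ∈ range d | LinearMap.ker f ∈ sepSet ρ (ρ (x ^ k) '' A) (ρ (x ^ (k + 1)) '' A)} =
      2 * q := by
  obtain ⟨a, ha⟩ := hA.nonempty
  have hg (k : ℕ) : f (ρ (x ^ (k + 2)) v) = 2 * cos θ * f (ρ (x ^ (k + 1)) v) - f (ρ (x ^ k) v) := by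
    rw [pow_add_two_apply hK hKx hvK, map_sub, map_smul, smul_eq_mul]
  obtain ⟨R, hR, ψ, hψ⟩ := exists_pos_mul_sin_add_of_recurrence (g := fun k => f (ρ (x ^ k) v))
    (sin_pos_of_pos_of_lt_pi hθ0 hθπ) hg (by simpa using hfv)
  have hAk (k : ℕ) : IsChamber ρ (ρ (x ^ k) '' A) := hA.image _
  have hak (k : ℕ) : ρ (x ^ k) a ∈ ρ (x ^ k) '' A := mem_image_of_mem _ ha
  have hs0 (k : ℕ) : f (ρ (x ^ k) a) ≠ 0 := (hAk k).apply_ne_zero hf (hak k)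
  rw [← card_filter_mul_neg_eq hθ0 hθπ hdq (s := fun k => f (ρ (x ^ k) a)) hs0 (by simp [hxd])]
  · refine congrArg card (filter_congr fun k _ => ?_)
    exact mem_sepSet_iff (hAk k) (hAk (k + 1)) hf (subset_closure (hak k))
      (subset_closure (hak (k + 1))) (hs0 k) (hs0 (k + 1))
  · intro k hk
    have hgk : f (ρ (x ^ k) v) ≠ 0 := by
      rw [hψ]
      exact mul_ne_zero hR.ne' hk
    have := (hAk k).mul_pos_of_mem_closure hf (hak k)
      (mem_closure_image (ρ (x ^ k)).continuous.continuousAt hvA) hgk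
    rw [hψ, mul_left_comm] at this
    exact pos_of_mul_pos_right this hR.le

lemma sepSet_pow_eq_image (k : ℕ) :
    sepSet ρ (ρ (x ^ k) '' A) (ρ (x ^ (k + 1)) '' A) =
      (fun H => H.map (ρ (x ^ k)).toLinearEquiv.toLinearMap) '' sepSet ρ A (ρ x '' A) := by
  rw [← sepSet_image, image_image]
  simp [pow_succ]

lemma ncard_sepSet_pow (k : ℕ) :
    (sepSet ρ (ρ (x ^ k) '' A) (ρ (x ^ (k + 1)) '' A)).ncard = (sepSet ρ A (ρ x '' A)).ncard := by
  rw [sepSet_pow_eq_image,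
    ncard_image_of_injective _ (Submodule.map_injective_of_injective (ρ _).injective)]

lemma sepSet_pow_subset (hKx : MapsTo (ρ x) K K)
    (hsep : ∀ H ∈ sepSet ρ A (ρ x '' A), ¬ (K : Set V) ⊆ H) (k : ℕ) :
    sepSet ρ (ρ (x ^ k) '' A) (ρ (x ^ (k + 1)) '' A) ⊆
      mirrors ρ \ {H : Submodule ℝ V | (K : Set V) ⊆ H} := by
  rw [sepSet_pow_eq_image]
  rintro _ ⟨H, hH, rfl⟩
  exact ⟨map_mem_mirrors hH.1 _,
    fun hKH => hsep H hH (subset_of_subset_map (ρ _).injective (mapsTo_pow hKx k) hKH)⟩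

lemma ncard_sepSet_mul_pi_of_pos_of_lt_pi [Finite W] (hθ0 : 0 < θ) (hθπ : θ < π)
    (hK : K ≤ eigSp ρ x θ) (hKx : MapsTo (ρ x) K K) (hA : IsChamber ρ A)
    (hsep : ∀ H ∈ sepSet ρ A (ρ x '' A), ¬ (K : Set V) ⊆ H) (hvK : v ∈ K) (hv0 : v ≠ 0)
    (hvA : v ∈ closure A) (hreg : ∀ H ∈ mirrors ρ, v ∈ H → ρ x v ∈ H → (K : Set V) ⊆ H) :
    ((sepSet ρ A (ρ x '' A)).ncard : ℝ) * π =
      θ * ((mirrors ρ \ {H : Submodule ℝ V | (K : Set V) ⊆ H}).ncard : ℝ) := by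
  classical
  obtain ⟨d, q, hd, hxd, hdq⟩ := exists_pow_eq_one_mul_eq hθ0 hθπ hK hKx hvK hv0
  set T := mirrors ρ \ {H : Submodule ℝ V | (K : Set V) ⊆ H}
  have hT : T.Finite := mirrors_finite.sdiff
  let crosses (k : ℕ) (H : Submodule ℝ V) : Prop :=
    H ∈ sepSet ρ (ρ (x ^ k) '' A) (ρ (x ^ (k + 1)) '' A)
  have hrow : ∀ k ∈ range d,
      #(hT.toFinset.bipartiteAbove crosses k) = (sepSet ρ A (ρ x '' A)).ncard := by
    intro k _
    rw [← ncard_coe_finset, coe_bipartiteAbove, ← ncard_sepSet_pow k]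
    congr 1
    ext H
    exact ⟨And.right, fun h => ⟨hT.mem_toFinset.mpr (sepSet_pow_subset hKx hsep k h), h⟩⟩
  have hcol : ∀ H ∈ hT.toFinset, #((range d).bipartiteBelow crosses H) = 2 * q := by
    intro H hH
    rw [Set.Finite.mem_toFinset] at hH
    obtain ⟨f, rfl⟩ := exists_ker_eq_of_mem_mirrors hH.1
    exact card_filter_mem_sepSet_pow hθ0 hθπ hdq hxd hK hKx hA hvK hvA hH.1
      (not_and_or.mp fun h => hH.2 (hreg _ hH.1 h.1 h.2))
  have hcount := card_mul_eq_card_mul crosses hrow hcol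
  rw [card_range, ← ncard_eq_toFinset_card T hT] at hcount
  have hcount' : (d : ℝ) * (sepSet ρ A (ρ x '' A)).ncard = T.ncard * (2 * q) := by
    exact_mod_cast hcount
  apply mul_left_cancel₀ (show (d : ℝ) ≠ 0 by positivity)
  linear_combination π * hcount' - (T.ncard : ℝ) * hdq

lemma sepSet_eq_of_sin_eq_zero (hθ : sin θ = 0) (hK : K ≤ eigSp ρ x θ) (hA : IsChamber ρ A)
    (hsep : ∀ H ∈ sepSet ρ A (ρ x '' A), ¬ (K : Set V) ⊆ H) (hvK : v ∈ K)
    (hvA : v ∈ closure A) (hreg : ∀ H ∈ mirrors ρ, v ∈ H → ρ x v ∈ H → (K : Set V) ⊆ H) :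
    sepSet ρ A (ρ x '' A) = {H ∈ mirrors ρ \ {H : Submodule ℝ V | (K : Set V) ⊆ H} | cos θ < 0} := by
  have hxv := apply_eq_cos_smul_of_sin_eq_zero (hK hvK) hθ
  have hcos : cos θ ≠ 0 := fun h => by simpa [hθ, h] using sin_sq_add_cos_sq θ
  have key : ∀ H ∈ mirrors ρ, ¬ (K : Set V) ⊆ H → (H ∈ sepSet ρ A (ρ x '' A) ↔ cos θ < 0) := by
    intro H hH hKH
    obtain ⟨f, rfl⟩ := exists_ker_eq_of_mem_mirrors hH
    have hfv : f v ≠ 0 := fun h => hKH (hreg _ hH h (hxv ▸ Submodule.smul_mem _ _ h))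
    have hfxv : f (ρ x v) = cos θ * f v := by rw [hxv, map_smul, smul_eq_mul]
    rw [mem_sepSet_iff hA (hA.image x) hH hvA
      (mem_closure_image (ρ x).continuous.continuousAt hvA) hfv (hfxv ▸ mul_ne_zero hcos hfv), hfxv,
      mul_left_comm]
    exact ⟨fun h => neg_of_mul_neg_left h (mul_self_nonneg _),
      fun h => mul_neg_of_neg_of_pos h (mul_self_pos.mpr hfv)⟩
  ext H
  exact ⟨fun hH => ⟨⟨hH.1, hsep H hH⟩, (key H hH.1 (hsep H hH)).mp hH⟩,
    fun ⟨⟨hH, hKH⟩, hneg⟩ => (key H hH hKH).mpr hneg⟩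

end Counting

open SemidirectProduct in
theorem stmt_6_general {B W : Type*} [Group W] [Finite W] {M : CoxeterMatrix B}
    (cs : CoxeterSystem M W) (δ : MulAut W)
    {V : Type*} [NormedAddCommGroup V] [InnerProductSpace ℝ V] [FiniteDimensional ℝ V]
    (ρ : Wtilde δ →* (V ≃ₗᵢ[ℝ] V))
    (C : Set V)
    -- `ℓ(w̃_A) = #𝔥(A, w̃(A))` for every chamber `A = z(C)` (part of the context)
    (hlen : ∀ (z : W) (x : Wtilde δ),
      tlen cs ((inl z)⁻¹ * x * inl z) =
        (sepSet ρ (ρ (inl z) '' C) (ρ x '' (ρ (inl z) '' C))).ncard)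
    -- the element `w̃`, the angle `θ`, and the `w̃`-stable subspace `K ⊆ V^θ_{w̃}`
    (x : Wtilde δ) (θ : ℝ) (hθ : θ ∈ Set.Icc 0 Real.pi)
    (K : Submodule ℝ V) (hK : K ≤ eigSp ρ x θ)
    (hKstab : ρ x '' (K : Set V) = (K : Set V))
    -- the chamber `A`, with `A` and `w̃(A)` in the same component of `V − ∪_{H∈𝔥_K} H`
    (A : Set V) (hA : IsChamber ρ A) (xA : W) (hxA : ρ (inl xA) '' C = A)
    (hcomp : ∃ a ∈ A, ∃ b ∈ ρ x '' A, b ∈ connectedComponentIn (chamberDomK ρ (K : Set V)) a)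
    -- `Ā` contains a nonzero `v ∈ K` with: every mirror containing `v` and `w̃(v)` contains `K`
    (hv : ∃ v : V, v ∈ K ∧ v ≠ 0 ∧ v ∈ closure A ∧
      ∀ H ∈ mirrors ρ, v ∈ H → ρ x v ∈ H → (K : Set V) ⊆ (H : Set V)) :
    tlen cs ((inl xA)⁻¹ * x * inl xA) = (sepSet ρ A (ρ x '' A)).ncard ∧
    (tlen cs ((inl xA)⁻¹ * x * inl xA) : ℝ) * Real.pi =
      θ * ((mirrors ρ \ {H : Submodule ℝ V | (K : Set V) ⊆ (H : Set V)}).ncard : ℝ) := by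
  have hlenA : tlen cs ((inl xA)⁻¹ * x * inl xA) = (sepSet ρ A (ρ x '' A)).ncard := by
    simpa only [hxA] using hlen xA x
  refine ⟨hlenA, ?_⟩
  rw [hlenA]
  obtain ⟨v, hvK, hv0, hvA, hreg⟩ := hv
  have hsep := fun H (hH : H ∈ sepSet ρ A (ρ x '' A)) =>
    not_subset_of_mem_sepSet hA.subset_chamberDom hcomp hH
  obtain ⟨hθ0, hθπ⟩ := hθ
  rcases hθ0.eq_or_lt with rfl | hθ0
  · rw [sepSet_eq_of_sin_eq_zero sin_zero hK hA hsep hvK hvA hreg, cos_zero]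
    simp [not_lt.mpr zero_le_one]
  rcases hθπ.eq_or_lt with rfl | hθπ
  · rw [sepSet_eq_of_sin_eq_zero sin_pi hK hA hsep hvK hvA hreg, cos_pi]
    simp only [Left.neg_neg_iff, zero_lt_one, Set.sep_true, mul_comm]
  exact ncard_sepSet_mul_pi_of_pos_of_lt_pi hθ0 hθπ hK (mapsTo_iff_image_subset.mpr hKstab.subset)
    hA hsep hvK hv0 hvA hreg

open SemidirectProduct in
/-- let `K ⊆ V^θ_{w̃}` be a subspace with `w̃(K) = K`, and let `A` be a chamber
such that `A` and `w̃(A)` lie in the same connected component of `V − ∪_{H ∈ 𝔥_K} H` and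
`Ā` contains a nonzero `v ∈ K` such that every mirror containing both `v` and `w̃(v)`
contains `K`.  Then `ℓ(w̃_A) = #𝔥(A, w̃(A)) = (θ/π)·#(𝔥 − 𝔥_K)`. -/
theorem stmt_6 {B W : Type*} [Group W] [Finite W] {M : CoxeterMatrix B}
    (cs : CoxeterSystem M W) (δ : MulAut W)
    (hδ : (δ : W ≃* W) '' (Set.range cs.simple) = Set.range cs.simple)
    {V : Type*} [NormedAddCommGroup V] [InnerProductSpace ℝ V] [FiniteDimensional ℝ V]
    (ρ : Wtilde δ →* (V ≃ₗᵢ[ℝ] V)) (hρ : Function.Injective ρ)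
    (hrefl : ∀ i : B, ∃ H : Submodule ℝ V, Module.finrank ℝ H + 1 = Module.finrank ℝ V ∧
      ρ (inl (cs.simple i)) = H.reflection)
    (C : Set V) (hC : IsChamber ρ C)
    -- `ℓ(w̃_A) = #𝔥(A, w̃(A))` for every chamber `A = z(C)` (part of the context)
    (hlen : ∀ (z : W) (x : Wtilde δ),
      tlen cs ((inl z)⁻¹ * x * inl z) =
        (sepSet ρ (ρ (inl z) '' C) (ρ x '' (ρ (inl z) '' C))).ncard)
    -- the element `w̃`, the angle `θ`, and the `w̃`-stable subspace `K ⊆ V^θ_{w̃}`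
    (x : Wtilde δ) (θ : ℝ) (hθ : θ ∈ Set.Icc 0 Real.pi)
    (K : Submodule ℝ V) (hK : K ≤ eigSp ρ x θ)
    (hKstab : ρ x '' (K : Set V) = (K : Set V))
    -- the chamber `A`, with `A` and `w̃(A)` in the same component of `V − ∪_{H∈𝔥_K} H`
    (A : Set V) (hA : IsChamber ρ A) (xA : W) (hxA : ρ (inl xA) '' C = A)
    (hcomp : ∃ a ∈ A, ∃ b ∈ ρ x '' A, b ∈ connectedComponentIn (chamberDomK ρ (K : Set V)) a)
    -- `Ā` contains a nonzero `v ∈ K` with: every mirror containing `v` and `w̃(v)` contains `K`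
    (hv : ∃ v : V, v ∈ K ∧ v ≠ 0 ∧ v ∈ closure A ∧
      ∀ H ∈ mirrors ρ, v ∈ H → ρ x v ∈ H → (K : Set V) ⊆ (H : Set V)) :
    tlen cs ((inl xA)⁻¹ * x * inl xA) = (sepSet ρ A (ρ x '' A)).ncard ∧
    (tlen cs ((inl xA)⁻¹ * x * inl xA) : ℝ) * Real.pi =
      θ * ((mirrors ρ \ {H : Submodule ℝ V | (K : Set V) ⊆ (H : Set V)}).ncard : ℝ) :=
  stmt_6_general cs δ ρ C hlen x θ hθ K hK hKstab A hA xA hxA hcomp hv
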